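/- On the frame 𝔯L of round ideals of a proximity frame L, the relation I ⊑ J defined by (I ⊆ J and I ≪ κ_L(ς_L(J))) is a proximity on 𝔯L, and I ⊑ J holds iff I ⊆ J and ς_L(I) ≺ ς_L(J). -/
import Mathlib


open Set

variable {L M : Type*}

/-- An ideal of a frame: contains ⊥, is a downset, and is closed under binary joins. -/
def IsIdl [Order.Frame L] (I : Set L) : Prop :=
  ⊥ ∈ I ∧ (∀ a b : L, a ≤ b → b ∈ I → a ∈ I) ∧ (∀ a b : L, a ∈ I → b ∈ I → a ⊔ b ∈ I)

/-- Roundness of a subset with respect to a relation `r`. -/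
def IsRnd [Order.Frame L] (r : L → L → Prop) (I : Set L) : Prop :=
  ∀ a ∈ I, ∃ b ∈ I, r a b

/-- A round ideal. -/
def RndIdl [Order.Frame L] (r : L → L → Prop) (I : Set L) : Prop :=
  IsIdl I ∧ IsRnd r I

/-- The join of a collection of ideals: all finite joins of elements of the union. -/
def idlJoin [Order.Frame L] (𝒥 : Set (Set L)) : Set L :=
  {a | ∃ F : Finset L, (↑F : Set L) ⊆ ⋃₀ 𝒥 ∧ a = F.sup id}

/-- The way-below relation in the frame of round ideals (directed joins are unions). -/
def wb [Order.Frame L] (r : L → L → Prop) (I J : Set L) : Prop :=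
  ∀ 𝒟 : Set (Set L), 𝒟.Nonempty → (∀ K ∈ 𝒟, RndIdl r K) →
    DirectedOn (· ⊆ ·) 𝒟 → J ⊆ ⋃₀ 𝒟 → ∃ K ∈ 𝒟, I ⊆ K

/-- A proximity on a frame. -/
structure IsProx [Order.Frame L] (r : L → L → Prop) : Prop where
  rel_le : ∀ a b : L, r a b → a ≤ b
  rel_bot : r ⊥ ⊥
  rel_top : r ⊤ ⊤
  rel_sup : ∀ a b c d : L, r a b → r c d → r (a ⊔ c) (b ⊔ d)
  rel_inf : ∀ a b c d : L, r a b → r c d → r (a ⊓ c) (b ⊓ d)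
  rel_mono : ∀ a b c d : L, a ≤ b → r b c → c ≤ d → r a d
  rel_interp : ∀ a b : L, r a b → ∃ c, r a c ∧ r c b
  rel_apprx : ∀ a : L, a = sSup {b | r b a}

/-- κ_L(a) = {b | b ≺ a}. -/
def kap [Order.Frame L] (r : L → L → Prop) (a : L) : Set L := {b | r b a}

/-- 𝔯f(I) = {a | a ≺ f(b) for some b ∈ I}. -/
def rmap [Order.Frame L] [Order.Frame M] (s : M → M → Prop) (f : L → M) (I : Set L) :
    Set M := {a | ∃ b ∈ I, s a (f b)}

/-- The relation I ⊑ J on round ideals: I ⊆ J and I ≪ κ_L(ς_L(J)). -/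
def sqRel [Order.Frame L] (r : L → L → Prop) (I J : Set L) : Prop :=
  I ⊆ J ∧ wb r I (kap r (sSup J))

section Helpers

variable [Order.Frame L] {r : L → L → Prop}

lemma kap_rnd (hr : IsProx r) (c : L) : RndIdl r (kap r c) := by
  refine ⟨⟨?_, ?_, ?_⟩, ?_⟩
  · exact hr.rel_mono ⊥ ⊥ ⊥ c le_rfl hr.rel_bot bot_le
  · intro a b hab hb; exact hr.rel_mono a b c c hab hb le_rfl
  · intro a b ha hb
    exact hr.rel_mono _ (a ⊔ b) (c ⊔ c) c le_rfl (hr.rel_sup a c b c ha hb) (by simp)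
  · intro a ha
    obtain ⟨b, h1, h2⟩ := hr.rel_interp a c ha
    exact ⟨b, h2, h1⟩

lemma sSup_kap (hr : IsProx r) (c : L) : sSup (kap r c) = c := (hr.rel_apprx c).symm

lemma wb_kap (hr : IsProx r) (I : Set L) (c : L) :
    wb r I (kap r c) ↔ r (sSup I) c := by
  constructor
  · intro h
    obtain ⟨K, ⟨d, hd, rfl⟩, hIK⟩ := h (kap r '' {d | r d c})
      ⟨kap r ⊥, ⟨⊥, hr.rel_mono ⊥ ⊥ ⊥ c le_rfl hr.rel_bot bot_le, rfl⟩⟩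
      (by rintro K ⟨d, _, rfl⟩; exact kap_rnd hr d)
      (by
        rintro K ⟨d, hd, rfl⟩ K' ⟨e, he, rfl⟩
        refine ⟨kap r (d ⊔ e), ⟨d ⊔ e,
          hr.rel_mono _ (d ⊔ e) (c ⊔ c) c le_rfl (hr.rel_sup d c e c hd he) (by simp), rfl⟩,
          fun x hx => hr.rel_mono x x d (d ⊔ e) le_rfl hx le_sup_left,
          fun x hx => hr.rel_mono x x e (d ⊔ e) le_rfl hx le_sup_right⟩)
      (by
        intro b hb
        obtain ⟨d, h1, h2⟩ := hr.rel_interp b c hb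
        exact ⟨kap r d, ⟨d, h2, rfl⟩, h1⟩)
    exact hr.rel_mono (sSup I) d c c (sSup_le fun a ha => hr.rel_le a d (hIK ha)) hd le_rfl
  · intro h 𝒟 hne hrnd hdir hcov
    obtain ⟨d, h1, h2⟩ := hr.rel_interp (sSup I) c h
    obtain ⟨K, hK, hdK⟩ := hcov h2
    exact ⟨K, hK, fun a ha =>
      (hrnd K hK).1.2.1 a d (le_trans (le_sSup ha) (hr.rel_le _ _ h1)) hdK⟩

lemma sqRel_iff' (hr : IsProx r) (I J : Set L) :
    sqRel r I J ↔ I ⊆ J ∧ r (sSup I) (sSup J) :=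
  and_congr_right' (wb_kap hr I (sSup J))

lemma inter_rnd (hr : IsProx r) {I J : Set L} (hI : RndIdl r I) (hJ : RndIdl r J) :
    RndIdl r (I ∩ J) := by
  obtain ⟨⟨hb, hd, hs⟩, hrI⟩ := hI
  obtain ⟨⟨hb', hd', hs'⟩, hrJ⟩ := hJ
  refine ⟨⟨⟨hb, hb'⟩, fun a b hab hbm => ⟨hd a b hab hbm.1, hd' a b hab hbm.2⟩,
    fun a b ha hbm => ⟨hs a b ha.1 hbm.1, hs' a b ha.2 hbm.2⟩⟩, ?_⟩
  rintro a ⟨ha1, ha2⟩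
  obtain ⟨b, hb1, hb2⟩ := hrI a ha1
  obtain ⟨c, hc1, hc2⟩ := hrJ a ha2
  exact ⟨b ⊓ c, ⟨hd (b ⊓ c) b inf_le_left hb1, hd' (b ⊓ c) c inf_le_right hc1⟩,
    hr.rel_mono a (a ⊓ a) (b ⊓ c) (b ⊓ c) (by simp) (hr.rel_inf a b a c hb2 hc2) le_rfl⟩

lemma finsup_mem {J : Set L} (hJ : IsIdl J) :
    ∀ F : Finset L, (↑F : Set L) ⊆ J → F.sup id ∈ J := by
  classical
  intro F
  induction F using Finset.induction_on with
  | empty => intro _; simpa using hJ.1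
  | @insert a s ha ih =>
    intro h
    rw [Finset.sup_insert]
    exact hJ.2.2 _ _ (h (by simp)) (ih fun x hx => h (by simp [hx]))

lemma sSup_inter_kap (hr : IsProx r) {J : Set L} (hJ : IsIdl J) {c : L} (hc : c ≤ sSup J) :
    sSup (J ∩ kap r c) = c := by
  apply le_antisymm
  · exact sSup_le fun a ha => hr.rel_le a c ha.2
  · have h1 : sSup J ⊓ sSup (kap r c) ≤ sSup (J ∩ kap r c) := by
      rw [sSup_inf_sSup]
      refine iSup₂_le ?_
      rintro ⟨a, b⟩ ⟨ha, hb⟩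
      exact le_sSup ⟨hJ.2.1 (a ⊓ b) a inf_le_left ha,
        hr.rel_mono (a ⊓ b) b c c inf_le_right hb le_rfl⟩
    calc c = sSup J ⊓ c := (inf_eq_right.mpr hc).symm
      _ = sSup J ⊓ sSup (kap r c) := by rw [sSup_kap hr]
      _ ≤ _ := h1

lemma mem_idlJoin {𝒥 : Set (Set L)} {a : L} (h : a ∈ ⋃₀ 𝒥) : a ∈ idlJoin 𝒥 :=
  ⟨{a}, by simpa using h, by simp⟩

lemma sSup_idlJoin (𝒥 : Set (Set L)) : sSup (idlJoin 𝒥) = sSup (⋃₀ 𝒥) := by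
  apply le_antisymm
  · refine sSup_le ?_
    rintro a ⟨F, hF, rfl⟩
    exact Finset.sup_le fun b hb => le_sSup (hF hb)
  · exact sSup_le fun a ha => le_sSup (mem_idlJoin ha)

end Helpers

/-- the relation ⊑ is a proximity on the frame 𝔯L of round ideals,
and I ⊑ J iff I ⊆ J and ς_L(I) ≺ ς_L(J). -/
theorem stmt17 [Order.Frame L] (r : L → L → Prop) (hr : IsProx r) :
    (∀ I J : Set L, RndIdl r I → RndIdl r J → sqRel r I J → I ⊆ J) ∧
    sqRel r ({⊥} : Set L) ({⊥} : Set L) ∧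
    sqRel r (Set.univ : Set L) (Set.univ : Set L) ∧
    (∀ I J I' J' : Set L, RndIdl r I → RndIdl r J → RndIdl r I' → RndIdl r J' →
      sqRel r I J → sqRel r I' J' → sqRel r (idlJoin {I, I'}) (idlJoin {J, J'})) ∧
    (∀ I J I' J' : Set L, RndIdl r I → RndIdl r J → RndIdl r I' → RndIdl r J' →
      sqRel r I J → sqRel r I' J' → sqRel r (I ∩ I') (J ∩ J')) ∧
    (∀ I J K N : Set L, RndIdl r I → RndIdl r J → RndIdl r K → RndIdl r N →
      I ⊆ J → sqRel r J K → K ⊆ N → sqRel r I N) ∧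
    (∀ I J : Set L, RndIdl r I → RndIdl r J → sqRel r I J →
      ∃ C : Set L, RndIdl r C ∧ sqRel r I C ∧ sqRel r C J) ∧
    (∀ J : Set L, RndIdl r J →
      J = idlJoin {I : Set L | RndIdl r I ∧ sqRel r I J}) ∧
    (∀ I J : Set L, RndIdl r I → RndIdl r J →
      (sqRel r I J ↔ I ⊆ J ∧ r (sSup I) (sSup J))) := by
  refine ⟨fun I J _ _ h => h.1, ?_, ?_, ?_, ?_, ?_, ?_, ?_, fun I J _ _ => sqRel_iff' hr I J⟩
  · exact (sqRel_iff' hr _ _).2 ⟨le_rfl, by simpa using hr.rel_bot⟩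
  · exact (sqRel_iff' hr _ _).2 ⟨le_rfl, by simpa using hr.rel_top⟩
  · -- sup
    intro I J I' J' _ _ _ _ hIJ hIJ'
    obtain ⟨hs, hrel⟩ := (sqRel_iff' hr I J).1 hIJ
    obtain ⟨hs', hrel'⟩ := (sqRel_iff' hr I' J').1 hIJ'
    refine (sqRel_iff' hr _ _).2 ⟨?_, ?_⟩
    · rintro a ⟨F, hF, rfl⟩
      refine ⟨F, ?_, rfl⟩
      rw [Set.sUnion_pair] at hF ⊢
      exact hF.trans (Set.union_subset_union hs hs')
    · rw [sSup_idlJoin, sSup_idlJoin, Set.sUnion_pair, Set.sUnion_pair,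
        sSup_union, sSup_union]
      exact hr.rel_sup _ _ _ _ hrel hrel'
  · -- inf
    intro I J I' J' _ hJ _ hJ' hIJ hIJ'
    obtain ⟨hs, hrel⟩ := (sqRel_iff' hr I J).1 hIJ
    obtain ⟨hs', hrel'⟩ := (sqRel_iff' hr I' J').1 hIJ'
    refine (sqRel_iff' hr _ _).2 ⟨Set.inter_subset_inter hs hs', ?_⟩
    refine hr.rel_mono _ (sSup I ⊓ sSup I') (sSup J ⊓ sSup J') _ ?_
      (hr.rel_inf _ _ _ _ hrel hrel') ?_
    · exact le_inf (sSup_le_sSup Set.inter_subset_left)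
        (sSup_le_sSup Set.inter_subset_right)
    · rw [sSup_inf_sSup]
      refine iSup₂_le ?_
      rintro ⟨a, b⟩ ⟨ha, hb⟩
      exact le_sSup ⟨hJ.1.2.1 (a ⊓ b) a inf_le_left ha,
        hJ'.1.2.1 (a ⊓ b) b inf_le_right hb⟩
  · -- mono
    intro I J K N _ _ _ _ hIJ hJK hKN
    obtain ⟨hs, hrel⟩ := (sqRel_iff' hr J K).1 hJK
    exact (sqRel_iff' hr _ _).2 ⟨(hIJ.trans hs).trans hKN,
      hr.rel_mono _ _ _ _ (sSup_le_sSup hIJ) hrel (sSup_le_sSup hKN)⟩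
  · -- interpolation
    intro I J hI hJ hIJ
    obtain ⟨hs, hrel⟩ := (sqRel_iff' hr I J).1 hIJ
    obtain ⟨c, hc1, hc2⟩ := hr.rel_interp _ _ hrel
    set K : Set L := J ∩ kap r c with hKdef
    have hK : RndIdl r K := inter_rnd hr hJ (kap_rnd hr c)
    have hsSupK : sSup K = c := sSup_inter_kap hr hJ.1 (hr.rel_le _ _ hc2)
    have hIc : sSup I ≤ c := hr.rel_le _ _ hc1
    set C : Set L := {e | ∃ a ∈ I, ∃ b ∈ K, e ≤ a ⊔ b} with hCdef
    have hKC : K ⊆ C := fun b hb => ⟨⊥, hI.1.1, b, hb, by simp⟩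
    have hIC : I ⊆ C := fun a ha => ⟨a, ha, ⊥, hK.1.1, by simp⟩
    have hCJ : C ⊆ J := by
      rintro e ⟨a, ha, b, hb, hle⟩
      exact hJ.1.2.1 e (a ⊔ b) hle (hJ.1.2.2 a b (hs ha) hb.1)
    have hC : RndIdl r C := by
      refine ⟨⟨hIC hI.1.1, ?_, ?_⟩, ?_⟩
      · rintro x y hxy ⟨a, ha, b, hb, hle⟩
        exact ⟨a, ha, b, hb, hxy.trans hle⟩
      · rintro x y ⟨a, ha, b, hb, hle⟩ ⟨a', ha', b', hb', hle'⟩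
        exact ⟨a ⊔ a', hI.1.2.2 a a' ha ha', b ⊔ b', hK.1.2.2 b b' hb hb',
          (sup_le_sup hle hle').trans (le_of_eq (sup_sup_sup_comm a b a' b'))⟩
      · rintro e ⟨a, ha, b, hb, hle⟩
        obtain ⟨a', ha', haa⟩ := hI.2 a ha
        obtain ⟨b', hb', hbb⟩ := hK.2 b hb
        exact ⟨a' ⊔ b', ⟨a', ha', b', hb', le_rfl⟩,
          hr.rel_mono e (a ⊔ b) (a' ⊔ b') _ hle (hr.rel_sup a a' b b' haa hbb) le_rfl⟩
    have hsSupC : sSup C = c := by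
      apply le_antisymm
      · refine sSup_le ?_
        rintro e ⟨a, ha, b, hb, hle⟩
        exact hle.trans (sup_le ((le_sSup ha).trans hIc) (hr.rel_le b c hb.2))
      · rw [← hsSupK]; exact sSup_le_sSup hKC
    refine ⟨C, hC, (sqRel_iff' hr _ _).2 ⟨hIC, by rw [hsSupC]; exact hc1⟩,
      (sqRel_iff' hr _ _).2 ⟨hCJ, by rw [hsSupC]; exact hc2⟩⟩
  · -- approximation
    intro J hJ
    apply Set.Subset.antisymm
    · intro a ha
      obtain ⟨b, hb, hab⟩ := hJ.2 a ha
      obtain ⟨b', hb', hbb⟩ := hJ.2 b hb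
      refine mem_idlJoin ⟨J ∩ kap r b, ⟨inter_rnd hr hJ (kap_rnd hr b), ?_⟩, ha, hab⟩
      refine (sqRel_iff' hr _ _).2 ⟨Set.inter_subset_left, ?_⟩
      rw [sSup_inter_kap hr hJ.1 (le_sSup hb)]
      exact hr.rel_mono b b b' (sSup J) le_rfl hbb (le_sSup hb')
    · rintro e ⟨F, hF, rfl⟩
      refine finsup_mem hJ.1 F fun x hx => ?_
      obtain ⟨I, hI, hxI⟩ := hF hx
      exact hI.2.1 hxI
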